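/- arXiv:2407.13527 — 3 statements merged into one kernel-verified Lean document; each statement's English description precedes it below -/
import Mathlib

section
/- Let C ⊆ F_q^n be a k-dimensional F_q-linear code, let K be a finite field of characteristic p with q^k elements, let κ : K → Hom_{F_p}(C,F_p) be an F_p-linear isomorphism, write f_λ = κ(λ), and let D ⊆ K^m be an s-dimensional K-linear code with s ≥ 1. Then every element of D^Θ ∖ (C^⊥)^m has Hamming weight at least d(D); that is, ℓ := min{wt(X) : X ∈ D^Θ ∖ (C^⊥)^m} ≥ d(D). Consequently, if d(C) ≤ d(D), then min{d(C), ℓ} = d(C). -/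
/-!
Since `L/K` is separable, `(x, y) ↦ Tr(x ⬝ᵥ y)` identifies `Lⁿ` with its `K`-dual, so every
`f_λ` is represented by some `x`, and because `C` is `L`-linear, such an `x` lies in `C^⊥` exactly
when `f_λ = 0`. Hence `X ∈ D^Θ` with label `Λ` lies outside `(C^⊥)^m` iff `Λ ≠ 0`, and every
nonzero `Λ i` forces `X i ≠ 0`, so `wt X ≥ wt Λ ≥ d(D)`. If `D ≠ 0` this makes `D^Θ ∖ (C^⊥)^m`
nonempty, so `ℓ ≥ d(D) ≥ d(C)`; if `D = 0` then `d(D) = sInf ∅ = 0`, which forces `d(C) = 0`.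
-/

open Matrix

attribute [local instance] Classical.propDecidable

lemma hammingNorm_le_sum_hammingNorm {ι κ α β : Type*} [Fintype ι] [Fintype κ] [Zero α] [Zero β]
    [DecidableEq α] [DecidableEq β] (Λ : ι → α) (z : ι → κ → β) (h : ∀ i, z i = 0 → Λ i = 0) :
    hammingNorm Λ ≤ ∑ i, hammingNorm (z i) := by
  rw [hammingNorm, Finset.card_filter]
  refine Finset.sum_le_sum fun i _ => ?_
  split_ifs with hΛ
  · exact hammingNorm_pos_iff.2 (mt (h i) hΛ)
  · exact Nat.zero_le _

section TracePairing

variable (K L ι : Type*) [Field K] [Field L] [Algebra K L] [Fintype ι]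

noncomputable def traceDotProduct : LinearMap.BilinForm K (ι → L) :=
  (dotProductBilin K K).compr₂ (Algebra.trace K L)

variable {K L ι}

@[simp] lemma traceDotProduct_apply (x y : ι → L) :
    traceDotProduct K L ι x y = Algebra.trace K L (x ⬝ᵥ y) := rfl

variable [FiniteDimensional K L] [Algebra.IsSeparable K L]

lemma eq_zero_of_forall_trace_mul_eq_zero {a : L} (h : ∀ b : L, Algebra.trace K L (b * a) = 0) :
    a = 0 :=
  (traceForm_nondegenerate K L).2 a fun b => by rw [Algebra.traceForm_apply]; exact h b

lemma traceDotProduct_nondegenerate : (traceDotProduct K L ι).Nondegenerate :=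
  .ofSeparatingLeft fun x hx => funext fun j => eq_zero_of_forall_trace_mul_eq_zero fun b => by
    simpa [dotProduct_single, mul_comm] using hx (Pi.single j b)

lemma exists_trace_dotProduct_eq (C : Submodule L (ι → L)) (f : C →ₗ[K] K) :
    ∃ x : ι → L, ∀ c : C, Algebra.trace K L (x ⬝ᵥ c) = f c := by
  obtain ⟨g, hg⟩ := LinearMap.exists_extend (p := C.restrictScalars K) f
  refine ⟨((traceDotProduct K L ι).toDual traceDotProduct_nondegenerate).symm g, fun c => ?_⟩
  rw [← traceDotProduct_apply, LinearMap.BilinForm.apply_toDual_symm_apply, ← hg]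
  rfl

/-- Since `C` is an `L`-subspace, `x ⬝ᵥ c` can be tested against the whole trace form on `L`. -/
lemma dotProduct_eq_zero_of_trace_dotProduct_eq_zero {C : Submodule L (ι → L)} {x : ι → L}
    (h : ∀ c ∈ C, Algebra.trace K L (x ⬝ᵥ c) = 0) : ∀ c ∈ C, x ⬝ᵥ c = 0 := fun c hc =>
  eq_zero_of_forall_trace_mul_eq_zero fun b => by
    simpa [dotProduct_smul] using h (b • c) (C.smul_mem b hc)

lemma forall_dotProduct_eq_zero_iff {C : Submodule L (ι → L)} {x : ι → L} {f : C →ₗ[K] K}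
    (hx : ∀ c : C, Algebra.trace K L (x ⬝ᵥ c) = f c) : (∀ c ∈ C, x ⬝ᵥ c = 0) ↔ f = 0 := by
  constructor
  · intro h
    ext c
    simp [← hx, h c c.2]
  · rintro rfl
    exact dotProduct_eq_zero_of_trace_dotProduct_eq_zero fun c hc => hx ⟨c, hc⟩

end TracePairing

theorem stmt_11_general (p n m : ℕ) [Fact p.Prime]
    (F K : Type) [Field F] [Fintype F] [Algebra (ZMod p) F]
    [Field K] [Algebra (ZMod p) K]
    (C : Submodule F (Fin n → F))
    (κ : K ≃ₗ[ZMod p] (↥C →ₗ[ZMod p] ZMod p))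
    (D : Submodule K (Fin m → K)) :
    (∀ z : Fin m → Fin n → F,
      (∃ Λ ∈ D, ∀ (i : Fin m) (c : ↥C),
          Algebra.trace (ZMod p) F (z i ⬝ᵥ (c : Fin n → F)) = κ (Λ i) c) →
      ¬(∀ i : Fin m, ∀ y ∈ C, z i ⬝ᵥ y = 0) →
      sInf {w : ℕ | ∃ Λ ∈ D, Λ ≠ 0 ∧ w = hammingNorm Λ} ≤ ∑ i : Fin m, hammingNorm (z i))
    ∧ (sInf {w : ℕ | ∃ c ∈ C, c ≠ 0 ∧ w = hammingNorm c}
          ≤ sInf {w : ℕ | ∃ Λ ∈ D, Λ ≠ 0 ∧ w = hammingNorm Λ} →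
        min (sInf {w : ℕ | ∃ c ∈ C, c ≠ 0 ∧ w = hammingNorm c})
            (sInf {w : ℕ | ∃ z : Fin m → Fin n → F,
              (∃ Λ ∈ D, ∀ (i : Fin m) (c : ↥C),
                Algebra.trace (ZMod p) F (z i ⬝ᵥ (c : Fin n → F)) = κ (Λ i) c)
              ∧ ¬(∀ i : Fin m, ∀ y ∈ C, z i ⬝ᵥ y = 0)
              ∧ w = ∑ i : Fin m, hammingNorm (z i)})
          = sInf {w : ℕ | ∃ c ∈ C, c ≠ 0 ∧ w = hammingNorm c}) := by
  have weight_bound : ∀ z : Fin m → Fin n → F,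
      (∃ Λ ∈ D, ∀ (i : Fin m) (c : ↥C),
          Algebra.trace (ZMod p) F (z i ⬝ᵥ (c : Fin n → F)) = κ (Λ i) c) →
      ¬(∀ i : Fin m, ∀ y ∈ C, z i ⬝ᵥ y = 0) →
      sInf {w : ℕ | ∃ Λ ∈ D, Λ ≠ 0 ∧ w = hammingNorm Λ} ≤ ∑ i : Fin m, hammingNorm (z i) := by
    rintro z ⟨Λ, hΛD, hz⟩ hz_not
    have hperp (i : Fin m) : (∀ y ∈ C, z i ⬝ᵥ y = 0) ↔ Λ i = 0 :=
      (forall_dotProduct_eq_zero_iff (hz i)).trans κ.map_eq_zero_iff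
    have hΛ : Λ ≠ 0 := fun h => hz_not fun i => (hperp i).2 (congrFun h i)
    calc sInf {w : ℕ | ∃ Λ ∈ D, Λ ≠ 0 ∧ w = hammingNorm Λ} ≤ hammingNorm Λ :=
          Nat.sInf_le ⟨Λ, hΛD, hΛ, rfl⟩
      _ ≤ ∑ i, hammingNorm (z i) := hammingNorm_le_sum_hammingNorm Λ z fun i hzi =>
          (hperp i).1 fun y _ => by rw [hzi, zero_dotProduct]
  refine ⟨weight_bound, fun hle => min_eq_left ?_⟩
  by_cases hD_ne : ∃ Λ ∈ D, Λ ≠ 0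
  · obtain ⟨Λ₀, hΛ₀D, hΛ₀⟩ := hD_ne
    choose x hx using fun l : K => exists_trace_dotProduct_eq C (κ l)
    refine le_csInf ?_ ?_
    · refine ⟨_, fun i => x (Λ₀ i), ⟨Λ₀, hΛ₀D, fun i => hx _⟩, fun h => hΛ₀ ?_, rfl⟩
      exact funext fun i => κ.map_eq_zero_iff.1 ((forall_dotProduct_eq_zero_iff (hx _)).1 (h i))
    · rintro w ⟨z, hz, hz_not, rfl⟩
      exact hle.trans (weight_bound z hz hz_not)
  · push Not at hD_ne
    have hdD : sInf {w : ℕ | ∃ Λ ∈ D, Λ ≠ 0 ∧ w = hammingNorm Λ} = 0 :=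
      Nat.sInf_eq_zero.2 <| .inr <| Set.eq_empty_of_forall_notMem fun _ ⟨Λ, hΛD, hΛ, _⟩ =>
        hΛ (hD_ne Λ hΛD)
    simp [Nat.le_zero.1 (hdD ▸ hle)]

/-- every element of `D^Θ ∖ (C^⊥)^m` has Hamming weight at least `d(D)`
(so `ℓ ≥ d(D)`); consequently if `d(C) ≤ d(D)` then `min{d(C), ℓ} = d(C)`. -/
theorem stmt_11 (p r n k m s : ℕ) [Fact p.Prime] (hr : 0 < r) (hs1 : 1 ≤ s)
    (F K : Type) [Field F] [Fintype F] [Algebra (ZMod p) F] (hF : Fintype.card F = p ^ r)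
    [Field K] [Fintype K] [Algebra (ZMod p) K] (hK : Fintype.card K = (p ^ r) ^ k)
    (C : Submodule F (Fin n → F)) (hC : Module.finrank F C = k)
    (κ : K ≃ₗ[ZMod p] (↥C →ₗ[ZMod p] ZMod p))
    (D : Submodule K (Fin m → K)) (hD : Module.finrank K ↥D = s) :
    (∀ z : Fin m → Fin n → F,
      (∃ Λ ∈ D, ∀ (i : Fin m) (c : ↥C),
          Algebra.trace (ZMod p) F (z i ⬝ᵥ (c : Fin n → F)) = κ (Λ i) c) →
      ¬(∀ i : Fin m, ∀ y ∈ C, z i ⬝ᵥ y = 0) →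
      sInf {w : ℕ | ∃ Λ ∈ D, Λ ≠ 0 ∧ w = hammingNorm Λ} ≤ ∑ i : Fin m, hammingNorm (z i))
    ∧ (sInf {w : ℕ | ∃ c ∈ C, c ≠ 0 ∧ w = hammingNorm c}
          ≤ sInf {w : ℕ | ∃ Λ ∈ D, Λ ≠ 0 ∧ w = hammingNorm Λ} →
        min (sInf {w : ℕ | ∃ c ∈ C, c ≠ 0 ∧ w = hammingNorm c})
            (sInf {w : ℕ | ∃ z : Fin m → Fin n → F,
              (∃ Λ ∈ D, ∀ (i : Fin m) (c : ↥C),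
                Algebra.trace (ZMod p) F (z i ⬝ᵥ (c : Fin n → F)) = κ (Λ i) c)
              ∧ ¬(∀ i : Fin m, ∀ y ∈ C, z i ⬝ᵥ y = 0)
              ∧ w = ∑ i : Fin m, hammingNorm (z i)})
          = sInf {w : ℕ | ∃ c ∈ C, c ≠ 0 ∧ w = hammingNorm c}) :=
  stmt_11_general p n m F K C κ D
end

section
/- Let C ⊆ F_q^n be a k-dimensional F_q-linear code (1 ≤ k < n), let K be a finite field of characteristic p with q^k elements, let κ : K → Hom_{F_p}(C,F_p) be an F_p-linear isomorphism, write f_λ = κ(λ), and let D = {(λ,…,λ) : λ ∈ K} ⊆ K^m be the repetition code with m ≥ 2. Then: (i) ⋂_{Λ∈D} ker(F_Λ) = {(c_1,…,c_m) ∈ C^m : c_1 + ⋯ + c_m = 0}; and (ii) with S̄ = {(c_1,…,c_m | d_1,…,d_m) : Σ_i c_i = 0, c_i ∈ C, d_i ∈ C^⊥}, one has min{swt(w) : w ∈ S̄^{⊥s} ∖ S̄} = min{d(C), m}. -/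
open Matrix

attribute [local instance] Classical.propDecidable

/-!
Part (i): `κ` is onto the dual of `C`, so `Σ κ(λ)(cᵢ) = κ(λ)(Σ cᵢ)` vanishes for all `λ` exactly
when `Σ cᵢ = 0`.

Part (ii): the trace form of `𝔽_q / 𝔽_p` is nondegenerate, so pairing `(a | b) ∈ S̄^{⊥s}` with
`(0 | α d eᵢ)` for `d ∈ C^⊥` gives `aᵢ ∈ C^⊥⊥ = C`, and pairing it with `(α c eⱼ − α c eᵢ | 0)`
for `c ∈ C` shows that all `bᵢ` induce the same functional on `C`. If `Σ aᵢ = 0`, then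
`(a | b) ∉ S̄` forces that functional to be nonzero, so every `bᵢ ≠ 0` and the weight is at least
`m`; otherwise `Σ aᵢ` is a nonzero codeword, whose support is covered by that of `(a | b)`. Both
bounds are attained: by `(c e₁ | 0)` with `c` of minimum weight, and by `(0 | e_j, …, e_j)` for a
coordinate `j` on which `C` does not vanish.
-/

theorem forall_sum_apply_eq_zero_iff {R V W ι : Type*} [Field R] [AddCommGroup V] [Module R V]
    [AddCommGroup W] [Module R W] [Fintype ι] (κ : W ≃ₗ[R] Module.Dual R V) (c : ι → V) :
    (∀ w, ∑ i, κ w (c i) = 0) ↔ ∑ i, c i = 0 := by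
  simp_rw [← map_sum]
  exact κ.surjective.forall.symm.trans (Module.forall_dual_apply_eq_zero_iff R _)

theorem eq_zero_of_forall_trace_mul_eq_zero_s12 {K L : Type*} [Field K] [Field L] [Algebra K L]
    [FiniteDimensional K L] [Algebra.IsSeparable K L] {x : L}
    (h : ∀ a, Algebra.trace K L (a * x) = 0) : x = 0 :=
  (traceForm_nondegenerate K L).2 x h

theorem mem_of_forall_dotProduct_eq_zero {F σ : Type*} [Field F] [Fintype σ]
    {C : Submodule F (σ → F)} {u : σ → F}
    (h : ∀ d, (∀ y ∈ C, d ⬝ᵥ y = 0) → d ⬝ᵥ u = 0) : u ∈ C := by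
  rw [← Subspace.forall_mem_dualAnnihilator_apply_eq_zero_iff]
  intro φ hφ
  obtain ⟨d, rfl⟩ := (dotProductEquiv F σ).surjective φ
  exact h d fun y hy => (Submodule.mem_dualAnnihilator _).1 hφ y hy

section SymplecticWeight

variable {M ι σ : Type*} [AddCommMonoid M] [Fintype ι] [Fintype σ]

theorem hammingNorm_single {j : σ} {a : M} (ha : a ≠ 0) :
    hammingNorm (Pi.single j a : σ → M) = 1 :=
  Finset.card_eq_one.2 ⟨j, by ext; simp [Pi.single_apply, ha]⟩

noncomputable def symplecticWeight (x : (ι → σ → M) × (ι → σ → M)) : ℕ :=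
  (Finset.univ.filter fun ij : ι × σ => x.1 ij.1 ij.2 ≠ 0 ∨ x.2 ij.1 ij.2 ≠ 0).card

theorem symplecticWeight_eq_sum (x : (ι → σ → M) × (ι → σ → M)) :
    symplecticWeight x = ∑ i, (Finset.univ.filter fun j => x.1 i j ≠ 0 ∨ x.2 i j ≠ 0).card := by
  simp only [symplecticWeight, Finset.card_filter, Fintype.sum_prod_type]

theorem symplecticWeight_single_zero (i : ι) (c : σ → M) :
    symplecticWeight (Pi.single i c, 0) = hammingNorm c := by
  rw [symplecticWeight_eq_sum, Fintype.sum_eq_single i fun l hl => by simp [Pi.single_eq_of_ne hl]]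
  simp [hammingNorm]

theorem symplecticWeight_zero_const (v : σ → M) :
    symplecticWeight ((0 : ι → σ → M), fun _ => v) = Fintype.card ι * hammingNorm v := by
  simp [symplecticWeight_eq_sum, hammingNorm]

theorem hammingNorm_sum_fst_le_symplecticWeight (x : (ι → σ → M) × (ι → σ → M)) :
    hammingNorm (∑ i, x.1 i) ≤ symplecticWeight x := by
  refine le_trans (Finset.card_le_card fun j hj => ?_) (Finset.card_image_le (f := Prod.snd))
  obtain ⟨i, -, hi⟩ := Finset.exists_ne_zero_of_sum_ne_zero
    (by simpa [Finset.sum_apply] using (Finset.mem_filter.1 hj).2)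
  exact Finset.mem_image.2 ⟨(i, j), by simp [hi], rfl⟩

theorem card_le_symplecticWeight {x : (ι → σ → M) × (ι → σ → M)} (hx : ∀ i, x.2 i ≠ 0) :
    Fintype.card ι ≤ symplecticWeight x := by
  refine le_trans (Finset.card_le_card fun i _ => ?_) (Finset.card_image_le (f := Prod.fst))
  obtain ⟨j, hj⟩ : ∃ j, x.2 i j ≠ 0 := Function.ne_iff.1 (hx i)
  exact Finset.mem_image.2 ⟨(i, j), by simp [hj], rfl⟩

end SymplecticWeight

section RepetitionStabilizer

variable {K F ι σ : Type*} [Field K] [Field F] [Algebra K F]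

theorem single_apply_mem {C : Submodule F (σ → F)} (i l : ι) {c : σ → F} (hc : c ∈ C) :
    (Pi.single i c : ι → σ → F) l ∈ C := by
  rcases eq_or_ne l i with rfl | hl
  · simpa using hc
  · rw [Pi.single_eq_of_ne hl]
    exact C.zero_mem

variable [Fintype ι] [Fintype σ]

variable (K) in
noncomputable def symplecticTraceForm (x y : (ι → σ → F) × (ι → σ → F)) : K :=
  Algebra.trace K F ((∑ i, x.2 i ⬝ᵥ y.1 i) - ∑ i, y.2 i ⬝ᵥ x.1 i)

variable (K) in
def symplecticOrthogonal (S : Set ((ι → σ → F) × (ι → σ → F))) : Set ((ι → σ → F) × (ι → σ → F)) :=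
  {x | ∀ y ∈ S, symplecticTraceForm K y x = 0}

def repetitionStabilizer (C : Submodule F (σ → F)) : Set ((ι → σ → F) × (ι → σ → F)) :=
  {x | (∀ i, x.1 i ∈ C) ∧ ∑ i, x.1 i = 0 ∧ ∀ i, ∀ y ∈ C, x.2 i ⬝ᵥ y = 0}

noncomputable def minWeight (C : Submodule F (σ → F)) : ℕ :=
  sInf {w | ∃ c ∈ C, c ≠ 0 ∧ w = hammingNorm c}

theorem exists_hammingNorm_eq_minWeight {C : Submodule F (σ → F)} (hC : C ≠ ⊥) :
    ∃ c ∈ C, c ≠ 0 ∧ hammingNorm c = minWeight C := by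
  obtain ⟨c, hc, hc0⟩ := Submodule.exists_mem_ne_zero_of_ne_bot hC
  obtain ⟨c, hc, hc0, h⟩ := Nat.sInf_mem (s := {w | ∃ c ∈ C, c ≠ 0 ∧ w = hammingNorm c})
    ⟨_, c, hc, hc0, rfl⟩
  exact ⟨c, hc, hc0, h.symm⟩

theorem sum_single_dotProduct (i : ι) (v : σ → F) (w : ι → σ → F) :
    ∑ l, (Pi.single i v : ι → σ → F) l ⬝ᵥ w l = v ⬝ᵥ w i := by
  rw [Fintype.sum_eq_single i fun l hl => by simp [Pi.single_eq_of_ne hl], Pi.single_eq_same]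

theorem sum_dotProduct_single (i : ι) (v : σ → F) (w : ι → σ → F) :
    ∑ l, w l ⬝ᵥ (Pi.single i v : ι → σ → F) l = w i ⬝ᵥ v := by
  rw [Fintype.sum_eq_single i fun l hl => by simp [Pi.single_eq_of_ne hl], Pi.single_eq_same]

variable [FiniteDimensional K F] [Algebra.IsSeparable K F] {C : Submodule F (σ → F)}
  {x : (ι → σ → F) × (ι → σ → F)}

theorem fst_mem_of_mem_symplecticOrthogonal
    (hx : x ∈ symplecticOrthogonal K (repetitionStabilizer C)) (i : ι) : x.1 i ∈ C := by
  refine mem_of_forall_dotProduct_eq_zero fun d hd => eq_zero_of_forall_trace_mul_eq_zero_s12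
    (K := K) fun a => ?_
  have hy : ((0 : ι → σ → F), Pi.single i (a • d)) ∈ repetitionStabilizer C := by
    refine ⟨fun _ => C.zero_mem, by simp, fun l y hy => ?_⟩
    rcases eq_or_ne l i with rfl | hl
    · simp [hd y hy]
    · simp [Pi.single_eq_of_ne hl]
  simpa [symplecticTraceForm, sum_single_dotProduct] using hx _ hy

theorem snd_dotProduct_eq_of_mem_symplecticOrthogonal
    (hx : x ∈ symplecticOrthogonal K (repetitionStabilizer C)) (i j : ι) {c : σ → F}
    (hc : c ∈ C) : x.2 i ⬝ᵥ c = x.2 j ⬝ᵥ c := by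
  rw [← sub_eq_zero, ← sub_dotProduct]
  refine eq_zero_of_forall_trace_mul_eq_zero_s12 (K := K) fun a => ?_
  have hac : a • c ∈ C := C.smul_mem a hc
  have hy : (Pi.single j (a • c) - Pi.single i (a • c), (0 : ι → σ → F)) ∈
      repetitionStabilizer C := by
    refine ⟨fun l => C.sub_mem (single_apply_mem j l hac) (single_apply_mem i l hac), ?_, by simp⟩
    simp [Finset.sum_sub_distrib]
  simpa [symplecticTraceForm, dotProduct_sub, Finset.sum_sub_distrib, sum_dotProduct_single,
    sub_dotProduct, mul_sub] using hx _ hy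

theorem min_minWeight_card_le_symplecticWeight
    (hx : x ∈ symplecticOrthogonal K (repetitionStabilizer C))
    (hxS : x ∉ repetitionStabilizer C) :
    min (minWeight C) (Fintype.card ι) ≤ symplecticWeight x := by
  have hmem := fst_mem_of_mem_symplecticOrthogonal hx
  by_cases hsum : ∑ i, x.1 i = 0
  · obtain ⟨i₀, c, hc, hi₀⟩ : ∃ i₀, ∃ c ∈ C, x.2 i₀ ⬝ᵥ c ≠ 0 := by
      by_contra! h
      exact hxS ⟨hmem, hsum, h⟩
    refine min_le_of_right_le (card_le_symplecticWeight fun i hi => hi₀ ?_)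
    rw [← snd_dotProduct_eq_of_mem_symplecticOrthogonal hx i i₀ hc, hi, zero_dotProduct]
  · calc min (minWeight C) (Fintype.card ι)
        ≤ minWeight C := min_le_left _ _
      _ ≤ hammingNorm (∑ i, x.1 i) := Nat.sInf_le ⟨_, C.sum_mem fun i _ => hmem i, hsum, rfl⟩
      _ ≤ symplecticWeight x := hammingNorm_sum_fst_le_symplecticWeight x

variable (K C) in
theorem sInf_symplecticWeight_eq_min [Nonempty ι] (hC : C ≠ ⊥) :
    sInf {w | ∃ x ∈ symplecticOrthogonal K (repetitionStabilizer (ι := ι) C),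
        x ∉ repetitionStabilizer C ∧ w = symplecticWeight x} =
      min (minWeight C) (Fintype.card ι) := by
  obtain ⟨c, hc, hc0, hcw⟩ := exists_hammingNorm_eq_minWeight hC
  obtain ⟨j, hj⟩ : ∃ j, c j ≠ 0 := Function.ne_iff.1 hc0
  let i₀ : ι := Classical.arbitrary ι
  have hminWeight : ∃ x ∈ symplecticOrthogonal K (repetitionStabilizer (ι := ι) C),
      x ∉ repetitionStabilizer C ∧ minWeight C = symplecticWeight x := by
    refine ⟨(Pi.single i₀ c, 0), fun y hy => ?_, fun h => hc0 ?_, ?_⟩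
    · simp [symplecticTraceForm, sum_dotProduct_single, hy.2.2 i₀ c hc]
    · simpa using h.2.1
    · rw [symplecticWeight_single_zero, hcw]
  have hcard : ∃ x ∈ symplecticOrthogonal K (repetitionStabilizer (ι := ι) C),
      x ∉ repetitionStabilizer C ∧ Fintype.card ι = symplecticWeight x := by
    refine ⟨(0, fun _ => Pi.single j 1), fun y hy => ?_, fun h => hj ?_, ?_⟩
    · rw [symplecticTraceForm, ← dotProduct_sum, hy.2.1]
      simp
    · simpa using h.2.2 i₀ c hc
    · rw [symplecticWeight_zero_const, hammingNorm_single one_ne_zero, mul_one]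
  refine le_antisymm (le_min (Nat.sInf_le hminWeight) (Nat.sInf_le hcard)) ?_
  refine le_csInf ⟨_, hcard⟩ ?_
  rintro _ ⟨x, hx, hxS, rfl⟩
  exact min_minWeight_card_le_symplecticWeight hx hxS

end RepetitionStabilizer

theorem stmt_12_general (p n k m : ℕ) [Fact p.Prime] (hk1 : 1 ≤ k)
    (hm : 2 ≤ m)
    (F K : Type) [Field F] [Fintype F] [Algebra (ZMod p) F]
    [Field K] [Algebra (ZMod p) K]
    (C : Submodule F (Fin n → F)) (hC : Module.finrank F C = k)
    (κ : K ≃ₗ[ZMod p] (↥C →ₗ[ZMod p] ZMod p)) :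
    ({c : Fin m → ↥C | ∀ Λ : Fin m → K, (∃ lam : K, Λ = fun _ => lam) →
        ∑ i : Fin m, κ (Λ i) (c i) = 0}
      = {c : Fin m → ↥C | ∑ i : Fin m, (c i : Fin n → F) = 0})
    ∧ sInf {w : ℕ | ∃ uv : (Fin m → Fin n → F) × (Fin m → Fin n → F),
        (∀ cd : (Fin m → Fin n → F) × (Fin m → Fin n → F),
          ((∀ i : Fin m, cd.1 i ∈ C) ∧ (∑ i : Fin m, cd.1 i = 0)
            ∧ (∀ i : Fin m, ∀ y ∈ C, cd.2 i ⬝ᵥ y = 0)) →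
          Algebra.trace (ZMod p) F
            ((∑ i : Fin m, cd.2 i ⬝ᵥ uv.1 i) - ∑ i : Fin m, uv.2 i ⬝ᵥ cd.1 i) = 0)
        ∧ ¬((∀ i : Fin m, uv.1 i ∈ C) ∧ (∑ i : Fin m, uv.1 i = 0)
            ∧ (∀ i : Fin m, ∀ y ∈ C, uv.2 i ⬝ᵥ y = 0))
        ∧ w = (Finset.univ.filter
            (fun ij : Fin m × Fin n => uv.1 ij.1 ij.2 ≠ 0 ∨ uv.2 ij.1 ij.2 ≠ 0)).card}
      = min (sInf {w : ℕ | ∃ c ∈ C, c ≠ 0 ∧ w = hammingNorm c}) m := by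
  refine ⟨Set.ext fun c => ?_, ?_⟩
  · have hcoe : ∑ i, (c i : Fin n → F) = 0 ↔ ∑ i, c i = 0 := by
      rw [← Submodule.coe_sum, ZeroMemClass.coe_eq_zero]
    refine ⟨fun h => hcoe.2 ((forall_sum_apply_eq_zero_iff κ c).1 fun lam => h _ ⟨lam, rfl⟩), ?_⟩
    rintro h _ ⟨lam, rfl⟩
    exact (forall_sum_apply_eq_zero_iff κ c).2 (hcoe.1 h) lam
  · have hCbot : C ≠ ⊥ := by
      rintro rfl
      simp only [finrank_bot] at hC
      omega
    have : Nonempty (Fin m) := ⟨⟨0, by omega⟩⟩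
    have h := sInf_symplecticWeight_eq_min (ι := Fin m) (ZMod p) C hCbot
    rwa [Fintype.card_fin] at h

/-- for the repetition code `D = {(λ,…,λ)} ⊆ K^m`:
(i) `⋂_{Λ∈D} ker F_Λ = {(c_1,…,c_m) ∈ C^m : Σ c_i = 0}`, and
(ii) the minimum symplectic weight over `S̄^{⊥s} ∖ S̄` equals `min{d(C), m}`. -/
theorem stmt_12 (p r n k m : ℕ) [Fact p.Prime] (hr : 0 < r) (hk1 : 1 ≤ k) (hkn : k < n)
    (hm : 2 ≤ m)
    (F K : Type) [Field F] [Fintype F] [Algebra (ZMod p) F] (hF : Fintype.card F = p ^ r)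
    [Field K] [Fintype K] [Algebra (ZMod p) K] (hK : Fintype.card K = (p ^ r) ^ k)
    (C : Submodule F (Fin n → F)) (hC : Module.finrank F C = k)
    (κ : K ≃ₗ[ZMod p] (↥C →ₗ[ZMod p] ZMod p)) :
    ({c : Fin m → ↥C | ∀ Λ : Fin m → K, (∃ lam : K, Λ = fun _ => lam) →
        ∑ i : Fin m, κ (Λ i) (c i) = 0}
      = {c : Fin m → ↥C | ∑ i : Fin m, (c i : Fin n → F) = 0})
    ∧ sInf {w : ℕ | ∃ uv : (Fin m → Fin n → F) × (Fin m → Fin n → F),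
        (∀ cd : (Fin m → Fin n → F) × (Fin m → Fin n → F),
          ((∀ i : Fin m, cd.1 i ∈ C) ∧ (∑ i : Fin m, cd.1 i = 0)
            ∧ (∀ i : Fin m, ∀ y ∈ C, cd.2 i ⬝ᵥ y = 0)) →
          Algebra.trace (ZMod p) F
            ((∑ i : Fin m, cd.2 i ⬝ᵥ uv.1 i) - ∑ i : Fin m, uv.2 i ⬝ᵥ cd.1 i) = 0)
        ∧ ¬((∀ i : Fin m, uv.1 i ∈ C) ∧ (∑ i : Fin m, uv.1 i = 0)
            ∧ (∀ i : Fin m, ∀ y ∈ C, uv.2 i ⬝ᵥ y = 0))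
        ∧ w = (Finset.univ.filter
            (fun ij : Fin m × Fin n => uv.1 ij.1 ij.2 ≠ 0 ∨ uv.2 ij.1 ij.2 ≠ 0)).card}
      = min (sInf {w : ℕ | ∃ c ∈ C, c ≠ 0 ∧ w = hammingNorm c}) m :=
  stmt_12_general p n k m hk1 hm F K C hC κ
end

section
/- Let C ⊆ F_q^n be a k-dimensional F_q-linear code, let K be a finite field of characteristic p with q^k elements, let κ : K → Hom_{F_p}(C,F_p) be an F_p-linear isomorphism, write f_λ = κ(λ), and let D = {(λ,…,λ) : λ ∈ K} ⊆ K^m be the repetition code. Then span_ℂ{Φ_Λ : Λ ∈ D} = span_ℂ{ψ_c : c ∈ C}, where ψ_c : (F_q^n)^m → ℂ is defined by ψ_c(x_1,…,x_m) = 1 if x_1,…,x_m ∈ C and x_1 + ⋯ + x_m = c, and ψ_c(x_1,…,x_m) = 0 otherwise. -/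
open Matrix

attribute [local instance] Classical.propDecidable

/-- `ω^a` where `ω = exp(2πi/p)` and `a : ZMod p`. -/
noncomputable def omg (p : ℕ) (a : ZMod p) : ℂ :=
  Complex.exp (2 * Real.pi * Complex.I * (a.val : ℂ) / (p : ℂ))

lemma omg_eq_stdAddChar (p : ℕ) [Fact p.Prime] (a : ZMod p) :
    omg p a = ZMod.stdAddChar a := by
  haveI : NeZero p := ⟨(Fact.out : p.Prime).ne_zero⟩
  rw [ZMod.stdAddChar_apply, ZMod.toCircle_apply, omg]

lemma omg_add (p : ℕ) [Fact p.Prime] (a b : ZMod p) :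
    omg p (a + b) = omg p a * omg p b := by
  haveI : NeZero p := ⟨(Fact.out : p.Prime).ne_zero⟩
  simp only [omg_eq_stdAddChar]
  exact AddChar.map_add_eq_mul _ a b

lemma omg_zero (p : ℕ) [Fact p.Prime] : omg p 0 = 1 := by
  haveI : NeZero p := ⟨(Fact.out : p.Prime).ne_zero⟩
  rw [omg_eq_stdAddChar]
  exact AddChar.map_zero_eq_one _

lemma omg_sum (p : ℕ) [Fact p.Prime] {ι : Type*} (s : Finset ι) (f : ι → ZMod p) :
    omg p (∑ i ∈ s, f i) = ∏ i ∈ s, omg p (f i) := by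
  classical
  induction s using Finset.cons_induction with
  | empty => simp [omg_zero]
  | cons a s ha ih => rw [Finset.sum_cons, Finset.prod_cons, omg_add, ih]

/-- Character sum over a finite `ZMod p`-module along a linear functional. -/
lemma sum_omg_linmap (p : ℕ) [Fact p.Prime] (K : Type) [AddCommGroup K] [Module (ZMod p) K]
    [Fintype K] (G : K →ₗ[ZMod p] ZMod p) :
    ∑ lam : K, omg p (G lam) = if G = 0 then (Fintype.card K : ℂ) else 0 := by
  haveI : NeZero p := ⟨(Fact.out : p.Prime).ne_zero⟩
  by_cases hG : G = 0
  · simp [hG, omg_zero]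
  · rw [if_neg hG]
    obtain ⟨lam₀, hlam₀⟩ : ∃ lam, G lam ≠ 0 := by
      by_contra h
      push_neg at h
      exact hG (LinearMap.ext fun lam => h lam)
    have hne : (ZMod.stdAddChar (N := p)).compAddMonoidHom G.toAddMonoidHom ≠ 1 := by
      rw [AddChar.ne_one_iff]
      refine ⟨lam₀, fun h => hlam₀ ?_⟩
      have h0 : ZMod.stdAddChar (G lam₀) = ZMod.stdAddChar (0 : ZMod p) := by
        simpa [AddChar.map_zero_eq_one] using h
      exact ZMod.injective_stdAddChar h0
    have := AddChar.sum_eq_zero_of_ne_one hne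
    simpa [omg_eq_stdAddChar] using this

/-- for the repetition code `D`, `span{Φ_Λ : Λ ∈ D}` equals the span of
the states `ψ_c = Σ_{c_1+⋯+c_m=c, c_i∈C} |c_1…c_m⟩`, `c ∈ C`. -/
theorem stmt_13 (p r n k m : ℕ) [Fact p.Prime] (hr : 0 < r)
    (F K : Type) [Field F] [Fintype F] [Algebra (ZMod p) F] (hF : Fintype.card F = p ^ r)
    [Field K] [Fintype K] [Algebra (ZMod p) K] (hK : Fintype.card K = (p ^ r) ^ k)
    (C : Submodule F (Fin n → F)) (hC : Module.finrank F C = k)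
    (κ : K ≃ₗ[ZMod p] (↥C →ₗ[ZMod p] ZMod p))
    (Φ : K → (Fin m → Fin n → F) → ℂ)
    (hΦ : ∀ (lam : K) (x : Fin m → Fin n → F), Φ lam x = ∏ i : Fin m,
      (if hx : x i ∈ C then (Real.sqrt ((p ^ r) ^ k))⁻¹ * omg p (κ lam ⟨x i, hx⟩) else 0))
    (ψ : ↥C → (Fin m → Fin n → F) → ℂ)
    (hψ : ∀ (c : ↥C) (x : Fin m → Fin n → F),
      ψ c x = if (∀ i : Fin m, x i ∈ C) ∧ (∑ i : Fin m, x i = (c : Fin n → F)) then 1 else 0) :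
    Submodule.span ℂ (Set.range Φ) = Submodule.span ℂ (Set.range ψ) := by
  classical
  set s : ℂ := Complex.ofReal ((Real.sqrt ((p ^ r) ^ k))⁻¹) with hs
  -- value of Φ when all coordinates are in C
  have hΦval : ∀ (lam : K) (x : Fin m → Fin n → F) (h : ∀ i, x i ∈ C),
      Φ lam x = s ^ m * omg p (κ lam (∑ i : Fin m, ⟨x i, h i⟩)) := by
    intro lam x h
    rw [hΦ]
    have : ∀ i : Fin m,
        (if hx : x i ∈ C then s * omg p (κ lam ⟨x i, hx⟩) else 0)
          = s * omg p ((κ lam) ⟨x i, h i⟩) := fun i => dif_pos (h i)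
    calc ∏ i : Fin m, (if hx : x i ∈ C then s * omg p (κ lam ⟨x i, hx⟩) else 0)
        = ∏ i : Fin m, s * omg p ((κ lam) ⟨x i, h i⟩) := Finset.prod_congr rfl fun i _ => this i
      _ = s ^ m * ∏ i : Fin m, omg p ((κ lam) ⟨x i, h i⟩) := by
          rw [Finset.prod_mul_distrib, Finset.prod_const, Finset.card_univ, Fintype.card_fin]
      _ = s ^ m * omg p (κ lam (∑ i : Fin m, ⟨x i, h i⟩)) := by
          rw [map_sum, omg_sum]
  have hΦzero : ∀ (lam : K) (x : Fin m → Fin n → F), ¬ (∀ i, x i ∈ C) → Φ lam x = 0 := by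
    intro lam x h
    push_neg at h
    obtain ⟨i, hi⟩ := h
    rw [hΦ]
    exact Finset.prod_eq_zero (Finset.mem_univ i) (dif_neg hi)
  -- Φ lam is a linear combination of the ψ c
  have hA : ∀ lam : K, Φ lam = ∑ c : ↥C, (s ^ m * omg p (κ lam c)) • ψ c := by
    intro lam
    funext x
    by_cases h : ∀ i, x i ∈ C
    · set c₀ : ↥C := ∑ i : Fin m, ⟨x i, h i⟩ with hc₀
      have hc₀coe : (c₀ : Fin n → F) = ∑ i : Fin m, x i := by
        simp [hc₀]
      have hψx : ∀ c : ↥C, ψ c x = if c = c₀ then 1 else 0 := by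
        intro c
        rw [hψ]
        by_cases hcc : c = c₀
        · subst hcc; rw [if_pos ⟨h, hc₀coe.symm⟩, if_pos rfl]
        · rw [if_neg, if_neg hcc]
          rintro ⟨-, hsum⟩
          exact hcc (Subtype.ext (by rw [← hsum, hc₀coe]))
      rw [hΦval lam x h]
      simp only [Finset.sum_apply, Pi.smul_apply, hψx, smul_eq_mul, mul_ite, mul_one, mul_zero]
      rw [Finset.sum_ite_eq' Finset.univ c₀ (fun c => s ^ m * omg p ((κ lam) c)),
        if_pos (Finset.mem_univ c₀)]
    · rw [hΦzero lam x h]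
      have : ∀ c : ↥C, ψ c x = 0 := by
        intro c; rw [hψ, if_neg]; rintro ⟨h', -⟩; exact h h'
      simp [this]
  -- the reverse combination
  have hB : ∀ c : ↥C,
      ∑ lam : K, omg p (κ lam (-c)) • Φ lam = ((Fintype.card K : ℂ) * s ^ m) • ψ c := by
    intro c
    funext x
    simp only [Finset.sum_apply, Pi.smul_apply, smul_eq_mul]
    by_cases h : ∀ i, x i ∈ C
    · set c₀ : ↥C := ∑ i : Fin m, ⟨x i, h i⟩ with hc₀
      have hc₀coe : (c₀ : Fin n → F) = ∑ i : Fin m, x i := by simp [hc₀]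
      have key : ∀ lam : K, omg p (κ lam (-c)) * Φ lam x
          = s ^ m * omg p ((LinearMap.applyₗ (c₀ - c) ∘ₗ κ.toLinearMap) lam) := by
        intro lam
        rw [hΦval lam x h, ← hc₀]
        have : omg p ((κ lam) (-c)) * (s ^ m * omg p ((κ lam) c₀))
            = s ^ m * (omg p ((κ lam) (-c)) * omg p ((κ lam) c₀)) := by ring
        rw [this, ← omg_add, ← map_add, neg_add_eq_sub]
        rfl
      rw [Finset.sum_congr rfl fun lam _ => key lam, ← Finset.mul_sum,
        sum_omg_linmap p K (LinearMap.applyₗ (c₀ - c) ∘ₗ κ.toLinearMap)]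
      have hGzero : (LinearMap.applyₗ (c₀ - c) ∘ₗ κ.toLinearMap) = 0 ↔ c₀ = c := by
        constructor
        · intro hG
          have : ∀ f : Module.Dual (ZMod p) ↥C, f (c₀ - c) = 0 := by
            intro f
            have := LinearMap.congr_fun hG (κ.symm f)
            simpa using this
          have := (Module.forall_dual_apply_eq_zero_iff (ZMod p) (c₀ - c)).mp this
          rwa [sub_eq_zero] at this
        · intro hG
          apply LinearMap.ext
          intro lam
          simp [hG]
      have hψx : ψ c x = if c₀ = c then 1 else 0 := by
        rw [hψ]
        by_cases hcc : c₀ = c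
        · rw [if_pos hcc, if_pos ⟨h, by rw [← hcc, hc₀coe]⟩]
        · rw [if_neg hcc, if_neg]
          rintro ⟨-, hsum⟩
          exact hcc (Subtype.ext (by rw [hc₀coe, hsum]))
      rw [hψx]
      by_cases hcc : c₀ = c
      · rw [if_pos ((hGzero.mpr hcc)), if_pos hcc]; ring
      · rw [if_neg (fun hG => hcc (hGzero.mp hG)), if_neg hcc]; ring
    · have hz : ∀ lam : K, Φ lam x = 0 := fun lam => hΦzero lam x h
      have hψz : ψ c x = 0 := by
        rw [hψ, if_neg]; rintro ⟨h', -⟩; exact h h'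
      simp [hz, hψz]
  -- nonzero constants
  have hs_ne : s ≠ 0 := by
    rw [hs]
    have hpos : (0:ℝ) < Real.sqrt ((p ^ r) ^ k) := by
      apply Real.sqrt_pos.mpr
      have hp : (0:ℝ) < (p:ℝ) := by exact_mod_cast (Fact.out : p.Prime).pos
      positivity
    simp only [ne_eq, Complex.ofReal_eq_zero, inv_eq_zero]
    exact ne_of_gt hpos
  have hcard_ne : ((Fintype.card K : ℂ) * s ^ m) ≠ 0 := by
    apply mul_ne_zero
    · exact_mod_cast Fintype.card_ne_zero
    · exact pow_ne_zero _ hs_ne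
  apply le_antisymm
  · rw [Submodule.span_le]
    rintro - ⟨lam, rfl⟩
    rw [hA lam]
    exact Submodule.sum_mem _ fun c _ =>
      Submodule.smul_mem _ _ (Submodule.subset_span ⟨c, rfl⟩)
  · rw [Submodule.span_le]
    rintro - ⟨c, rfl⟩
    have : ψ c = ((Fintype.card K : ℂ) * s ^ m)⁻¹ •
        ∑ lam : K, omg p (κ lam (-c)) • Φ lam := by
      rw [hB c, ← smul_assoc, smul_eq_mul, inv_mul_cancel₀ hcard_ne, one_smul]
    rw [this]
    exact Submodule.smul_mem _ _ (Submodule.sum_mem _ fun lam _ =>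
      Submodule.smul_mem _ _ (Submodule.subset_span ⟨lam, rfl⟩))
end
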